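/- arXiv:0904.4286 — 4 statements merged into one kernel-verified Lean document; each statement's English description precedes it below -/
import Mathlib

section
/- Every countably infinite linear order has a non-trivial self-embedding, i.e., an order-preserving injection f : L → L with f ≠ id. -/
open Set

section DushnikMiller

variable {L : Type*} [LinearOrder L]

/-- `x` and `y` are finitely far apart. -/
def frel (x y : L) : Prop := (Set.Icc x y ∪ Set.Icc y x).Finite

lemma frel_refl (x : L) : frel x x := by
  simp [frel]

lemma frel_symm {x y : L} (h : frel x y) : frel y x := by
  rwa [frel, Set.union_comm]

lemma Icc_subset_union_DM (x y z : L) : Icc x z ⊆ Icc x y ∪ Icc y z := by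
  intro w hw
  rcases le_total w y with h | h
  · exact Or.inl ⟨hw.1, h⟩
  · exact Or.inr ⟨h, hw.2⟩

lemma frel_trans {x y z : L} (h1 : frel x y) (h2 : frel y z) : frel x z := by
  refine (h1.union h2).subset ?_
  intro w hw
  rcases hw with hw | hw
  · rcases Icc_subset_union_DM x y z hw with h | h
    · exact Or.inl (Or.inl h)
    · exact Or.inr (Or.inl h)
  · rcases Icc_subset_union_DM z y x hw with h | h
    · exact Or.inr (Or.inr h)
    · exact Or.inl (Or.inr h)

lemma frel_of_finite {x y : L} (hxy : x ≤ y) (hf : (Icc x y).Finite) : frel x y := by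
  refine (hf.union (Set.finite_singleton x)).subset ?_
  intro w hw
  rcases hw with hw | hw
  · exact Or.inl hw
  · exact Or.inr (by simp [le_antisymm hw.2 (hxy.trans hw.1)])

lemma frel_convex {x0 a b u : L} (ha : frel x0 a) (hb : frel x0 b) (h1 : a ≤ u)
    (h2 : u ≤ b) : frel x0 u := by
  refine (ha.union hb).subset ?_
  intro w hw
  rcases hw with hw | hw
  · exact Or.inr (Or.inl ⟨hw.1, hw.2.trans h2⟩)
  · exact Or.inl (Or.inr ⟨h1.trans hw.1, hw.2⟩)

lemma icc_finite_of_frel {x y : L} (h : frel x y) : (Icc x y).Finite :=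
  h.subset Set.subset_union_left

/-- In an infinite class with no maximum, every element has a successor within the class. -/
lemma succ_exists (x0 a : L) (ha : frel x0 a)
    (hb : ∃ b, frel x0 b ∧ a < b) :
    ∃ m, frel x0 m ∧ a < m ∧ ∀ b, frel x0 b → a < b → m ≤ b := by
  obtain ⟨c, hc, hac⟩ := hb
  have hfinIcc : (Icc a c).Finite := icc_finite_of_frel (frel_trans (frel_symm ha) hc)
  have hTfin : ({b | frel x0 b} ∩ Ioc a c).Finite :=
    (hfinIcc.inter_of_right _).subset (Set.inter_subset_inter_right _ Set.Ioc_subset_Icc_self)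
  have hTne : ({b | frel x0 b} ∩ Ioc a c).Nonempty := ⟨c, hc, hac, le_refl c⟩
  obtain ⟨m, hm, hmin⟩ := Set.exists_min_image _ id hTfin hTne
  refine ⟨m, hm.1, hm.2.1, ?_⟩
  intro b hbcls hab
  rcases le_total b c with h | h
  · exact hmin b ⟨hbcls, hab, h⟩
  · exact hm.2.2.trans h

/-- In an infinite class with no minimum, every element has a predecessor within the class. -/
lemma pred_exists (x0 a : L) (ha : frel x0 a)
    (hb : ∃ b, frel x0 b ∧ b < a) :
    ∃ m, frel x0 m ∧ m < a ∧ ∀ b, frel x0 b → b < a → b ≤ m := by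
  obtain ⟨c, hc, hac⟩ := hb
  have hfinIcc : (Icc c a).Finite := icc_finite_of_frel (frel_trans (frel_symm hc) ha)
  have hTfin : ({b | frel x0 b} ∩ Ico c a).Finite :=
    (hfinIcc.inter_of_right _).subset (Set.inter_subset_inter_right _ Set.Ico_subset_Icc_self)
  have hTne : ({b | frel x0 b} ∩ Ico c a).Nonempty := ⟨c, hc, le_refl c, hac⟩
  obtain ⟨m, hm, hmax⟩ := Set.exists_max_image _ id hTfin hTne
  refine ⟨m, hm.1, hm.2.2, ?_⟩
  intro b hbcls hab
  rcases le_total c b with h | h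
  · exact hmax b ⟨hbcls, h, hab⟩
  · exact h.trans hm.2.1

/-- Case 1a: an infinite class with no maximum gives a successor-shift embedding. -/
lemma case_no_max (x0 : L)
    (hnomax : ∀ a, frel x0 a → ∃ b, frel x0 b ∧ a < b) :
    ∃ f : L → L, StrictMono f ∧ f ≠ id := by
  have hsucc : ∀ a, frel x0 a →
      ∃ m, frel x0 m ∧ a < m ∧ ∀ b, frel x0 b → a < b → m ≤ b :=
    fun a ha => succ_exists x0 a ha (hnomax a ha)
  choose m hm1 hm2 hm3 using hsucc
  classical
  refine ⟨fun a => if h : frel x0 a then m a h else a, ?_, ?_⟩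
  · intro x y hxy
    by_cases hx : frel x0 x <;> by_cases hy : frel x0 y
    · -- both in class
      simp only [dif_pos hx, dif_pos hy]
      exact lt_of_le_of_lt (hm3 x hx y hy hxy) (hm2 y hy)
    · -- x in class, y not
      simp only [dif_pos hx, dif_neg hy]
      rcases lt_trichotomy y (m x hx) with h | h | h
      · exact absurd (frel_convex hx (hm1 x hx) hxy.le h.le) hy
      · exact absurd (h ▸ hm1 x hx) hy
      · exact h
    · -- x not, y in class
      simp only [dif_neg hx, dif_pos hy]
      exact hxy.trans (hm2 y hy)
    · simp only [dif_neg hx, dif_neg hy]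
      exact hxy
  · intro h
    have := congrFun h x0
    simp only [dif_pos (frel_refl x0), id_eq] at this
    exact absurd this (ne_of_gt (hm2 x0 (frel_refl x0)))

/-- Case 1b: an infinite class with no minimum gives a predecessor-shift embedding. -/
lemma case_no_min (x0 : L)
    (hnomin : ∀ a, frel x0 a → ∃ b, frel x0 b ∧ b < a) :
    ∃ f : L → L, StrictMono f ∧ f ≠ id := by
  have hpred : ∀ a, frel x0 a →
      ∃ m, frel x0 m ∧ m < a ∧ ∀ b, frel x0 b → b < a → b ≤ m :=
    fun a ha => pred_exists x0 a ha (hnomin a ha)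
  choose m hm1 hm2 hm3 using hpred
  classical
  refine ⟨fun a => if h : frel x0 a then m a h else a, ?_, ?_⟩
  · intro x y hxy
    by_cases hx : frel x0 x <;> by_cases hy : frel x0 y
    · simp only [dif_pos hx, dif_pos hy]
      exact lt_of_lt_of_le (hm2 x hx) (hm3 y hy x hx hxy)
    · simp only [dif_pos hx, dif_neg hy]
      exact (hm2 x hx).trans hxy
    · simp only [dif_neg hx, dif_pos hy]
      rcases lt_trichotomy x (m y hy) with h | h | h
      · exact h
      · exact absurd (h ▸ hm1 y hy) hx
      · exact absurd (frel_convex (hm1 y hy) hy h.le hxy.le) hx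
    · simp only [dif_neg hx, dif_neg hy]
      exact hxy
  · intro h
    have := congrFun h x0
    simp only [dif_pos (frel_refl x0), id_eq] at this
    exact absurd this (ne_of_lt (hm2 x0 (frel_refl x0)))

/-- Case 2: all classes finite. -/
lemma case_all_finite {L : Type*} [LinearOrder L] [Countable L] [Infinite L]
    (hfin : ∀ x : L, {y | frel x y}.Finite) :
    ∃ f : L → L, StrictMono f ∧ f ≠ id := by
  letI st : Setoid L := ⟨frel, ⟨frel_refl, fun h => frel_symm h, fun h1 h2 => frel_trans h1 h2⟩⟩
  have hqinf : Infinite (Quotient st) := by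
    by_contra h
    rw [not_infinite_iff_finite] at h
    have huniv : (Set.univ : Set L).Finite := by
      have hU : (⋃ q : Quotient st, {y | frel q.out y}).Finite :=
        Set.finite_iUnion fun q => hfin _
      refine hU.subset ?_
      intro x _
      exact Set.mem_iUnion.2 ⟨Quotient.mk st x, Quotient.mk_out x⟩
    exact Set.infinite_univ huniv
  obtain ⟨x0⟩ : Nonempty L := inferInstance
  set S : Set L := {y | ∃ q : Quotient st, q ≠ Quotient.mk st x0 ∧ y = q.out} with hS
  -- S is nontrivial
  have houtinj : Function.Injective (Quotient.out : Quotient st → L) := Quotient.out_injective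
  have hcompl : ({Quotient.mk st x0} : Set (Quotient st))ᶜ.Infinite :=
    (Set.finite_singleton _).infinite_compl
  obtain ⟨q1, hq1⟩ := hcompl.nonempty
  obtain ⟨q2, hq2, hq2'⟩ := (hcompl.diff (Set.finite_singleton q1)).nonempty
  have hq1ne : q1 ≠ Quotient.mk st x0 := hq1
  have hq2ne : q2 ≠ Quotient.mk st x0 := hq2
  have hq12 : q1 ≠ q2 := fun h => hq2' (by simp [h])
  haveI hSnt : Nontrivial ↥S := by
    refine ⟨⟨q1.out, q1, hq1ne, rfl⟩, ⟨q2.out, q2, hq2ne, rfl⟩, ?_⟩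
    intro h
    exact hq12 (houtinj (congrArg Subtype.val h))
  -- different representatives are not frel-related
  have hrep_ne : ∀ {qa qb : Quotient st}, frel qa.out qb.out → qa = qb := by
    intro qa qb h
    have : Quotient.mk st qa.out = Quotient.mk st qb.out := Quotient.sound h
    rwa [Quotient.out_eq, Quotient.out_eq] at this
  -- S is densely ordered
  haveI hSdense : DenselyOrdered ↥S := by
    constructor
    rintro ⟨a, qa, hqa, rfl⟩ ⟨b, qb, hqb, rfl⟩ hab
    have hab' : qa.out < qb.out := hab
    have hnrel : ¬ frel qa.out qb.out := fun h => hab'.ne (by rw [hrep_ne h])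
    have hicc : (Icc qa.out qb.out).Infinite := by
      intro hficc
      exact hnrel (frel_of_finite hab'.le hficc)
    have hT : (Icc qa.out qb.out \
        ({y | frel qa.out y} ∪ {y | frel qb.out y} ∪ {y | frel x0 y})).Infinite :=
      hicc.diff (((hfin qa.out).union (hfin qb.out)).union (hfin x0))
    obtain ⟨c, hc1, hc2⟩ := hT.nonempty
    have hca : ¬ frel qa.out c := fun h => hc2 (Or.inl (Or.inl h))
    have hcb : ¬ frel qb.out c := fun h => hc2 (Or.inl (Or.inr h))
    have hcx0 : ¬ frel x0 c := fun h => hc2 (Or.inr h)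
    have hac : qa.out < c := lt_of_le_of_ne hc1.1 (fun h => hca (h ▸ frel_refl _))
    have hcbb : c < qb.out := lt_of_le_of_ne hc1.2 (fun h => hcb (frel_symm (h ▸ frel_refl _)))
    set d : L := (Quotient.mk st c).out with hd
    have hcd : frel d c := Quotient.mk_out c
    have hqc : Quotient.mk st c ≠ Quotient.mk st x0 := by
      intro h
      exact hcx0 (frel_symm (Quotient.exact h))
    have hdS : d ∈ S := ⟨Quotient.mk st c, hqc, rfl⟩
    have had : qa.out < d := by
      by_contra h
      push_neg at h
      have : Icc qa.out c ⊆ Icc d c := Set.Icc_subset_Icc_left h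
      have hf : (Icc qa.out c).Finite := (icc_finite_of_frel hcd).subset this
      exact hca (frel_of_finite hac.le hf)
    have hdb : d < qb.out := by
      by_contra h
      push_neg at h
      have : Icc c qb.out ⊆ Icc c d := Set.Icc_subset_Icc_right h
      have hf : (Icc c qb.out).Finite := (icc_finite_of_frel (frel_symm hcd)).subset this
      exact hcb (frel_symm (frel_of_finite hcbb.le hf))
    exact ⟨⟨d, hdS⟩, had, hdb⟩
  obtain ⟨e⟩ := Order.embedding_from_countable_to_dense L ↥S
  refine ⟨fun x => (e x : L), ?_, ?_⟩
  · intro x y hxy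
    exact_mod_cast e.strictMono hxy
  · intro h
    set z : L := (Quotient.mk st x0).out with hz
    have hzS : z ∉ S := by
      rintro ⟨q, hq, hq'⟩
      exact hq (houtinj hq'.symm)
    have : ((e z : L)) = z := congrFun h z
    exact hzS (this ▸ (e z).2)

end DushnikMiller

/-- Dushnik–Miller: every countably infinite linear order has a non-trivial
self-embedding. -/
theorem exists_nontrivial_selfEmbedding {L : Type*} [LinearOrder L]
    [Countable L] [Infinite L] :
    ∃ f : L → L, StrictMono f ∧ f ≠ id := by
  by_cases hfin : ∀ x : L, {y | frel x y}.Finite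
  · exact case_all_finite hfin
  · push_neg at hfin
    obtain ⟨x0, hx0⟩ := hfin
    have hinf : {y | frel x0 y}.Infinite := hx0
    by_cases hmax : ∃ mx, frel x0 mx ∧ ∀ b, frel x0 b → b ≤ mx
    · -- class has a maximum, hence (being infinite) no minimum
      obtain ⟨mx, hmx, hmx'⟩ := hmax
      apply case_no_min x0
      intro a ha
      by_contra h
      push_neg at h
      have hsub : {y | frel x0 y} ⊆ Icc a mx := by
        intro y hy
        exact ⟨h y hy, hmx' y hy⟩
      have : (Icc a mx).Finite := icc_finite_of_frel (frel_trans (frel_symm ha) hmx)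
      exact hinf (this.subset hsub)
    · push_neg at hmax
      apply case_no_max x0
      intro a ha
      exact hmax a ha
end

section
/- If a linear order L has an interval of order type ω + 1, then L has a non-trivial self-embedding. -/
private lemma withTop_add_one_lt {a b : WithTop ℕ} (h : a < b) : a + 1 < b + 1 := by
  cases a with
  | top => exact absurd h (by simp)
  | coe m =>
    cases b with
    | top =>
      rw [← WithTop.coe_one, ← WithTop.coe_add, top_add]
      exact WithTop.coe_lt_top (m + 1)
    | coe n =>
      have hmn : m < n := WithTop.coe_lt_coe.mp h
      rw [← WithTop.coe_one, ← WithTop.coe_add, ← WithTop.coe_add, WithTop.coe_lt_coe]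
      exact Nat.succ_lt_succ hmn

/-- If a linear order has an interval of order type ω + 1, then it has a
non-trivial self-embedding. -/
theorem exists_nontrivial_selfEmbedding_of_omega_add_one_interval
    {L : Type*} [LinearOrder L]
    (I : Set L) (hconv : I.OrdConnected) (hiso : Nonempty (I ≃o WithTop ℕ)) :
    ∃ f : L → L, StrictMono f ∧ f ≠ id := by
  classical
  obtain ⟨e⟩ := hiso
  refine ⟨fun x => if h : x ∈ I then (e.symm (e ⟨x, h⟩ + 1) : L) else x, ?_, ?_⟩
  · intro x y hxy
    by_cases hx : x ∈ I <;> by_cases hy : y ∈ I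
    · simp only [dif_pos hx, dif_pos hy]
      have h1 : e ⟨x, hx⟩ < e ⟨y, hy⟩ := e.lt_iff_lt.mpr (Subtype.mk_lt_mk.mpr hxy)
      exact Subtype.coe_lt_coe.mpr (e.symm.lt_iff_lt.mpr (withTop_add_one_lt h1))
    · -- y ∉ I, so y is above all of I
      simp only [dif_pos hx, dif_neg hy]
      set b : L := (e.symm (e ⟨x, hx⟩ + 1) : L) with hb
      have hbI : b ∈ I := (e.symm (e ⟨x, hx⟩ + 1)).2
      by_contra hcon
      push_neg at hcon
      exact hy (hconv.out hx hbI ⟨le_of_lt hxy, hcon⟩)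
    · -- x ∉ I, so x is below all of I
      simp only [dif_neg hx, dif_pos hy]
      set b : L := (e.symm (e ⟨y, hy⟩ + 1) : L) with hb
      have hbI : b ∈ I := (e.symm (e ⟨y, hy⟩ + 1)).2
      by_contra hcon
      push_neg at hcon
      exact hx (hconv.out hbI hy ⟨hcon, le_of_lt hxy⟩)
    · simpa [dif_neg hx, dif_neg hy] using hxy
  · intro hid
    have h0 := congrFun hid ((e.symm 0 : I) : L)
    simp only [id_eq, dif_pos (e.symm 0).2] at h0
    have h1 : (e.symm (e (e.symm 0) + 1) : L) = (e.symm 0 : L) := by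
      convert h0 using 3
    rw [e.apply_symm_apply] at h1
    have : e.symm (0 + 1) = e.symm 0 := Subtype.coe_injective h1
    have := e.symm.injective this
    simp at this
end

section
/- If L is a linear order with dense condensation and with no infinite strongly η-like interval, then every infinite interval of L contains blocks of arbitrarily large finite size: for every k there is a block of size at least k contained in the interval. -/
open Set

/-- The block relation: `x` and `y` are finitely far apart. -/
def Blk {L : Type*} [LinearOrder L] (x y : L) : Prop := (Set.uIcc x y).Finite

/-- The condensation of `L` restricted to the interval `I` is dense. -/
def DenseCondOn {L : Type*} [LinearOrder L] (I : Set L) : Prop :=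
  ∀ x ∈ I, ∀ y ∈ I, x < y → ¬ Blk x y →
    ∃ z ∈ I, x < z ∧ z < y ∧ ¬ Blk x z ∧ ¬ Blk z y

/-- `I` is a strongly η-like interval: convex, dense condensation, and a
uniform finite bound on block sizes. -/
def StronglyEtaLike {L : Type*} [LinearOrder L] (I : Set L) : Prop :=
  I.OrdConnected ∧ DenseCondOn I ∧
    ∃ k : ℕ, ∀ x ∈ I, ({y ∈ I | Blk x y}).Finite ∧ ({y ∈ I | Blk x y}).ncard < k

theorem DenseCondOn.of_ordConnected_subset {L : Type*} [LinearOrder L] {I J : Set L}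
    (hJ : DenseCondOn J) (hIJ : I ⊆ J) (hI : I.OrdConnected) : DenseCondOn I := by
  intro x hx y hy hxy hblk
  obtain ⟨z, -, hxz, hzy, hxz_blk, hzy_blk⟩ := hJ x (hIJ hx) y (hIJ hy) hxy hblk
  exact ⟨z, hI.out hx hy ⟨hxz.le, hzy.le⟩, hxz, hzy, hxz_blk, hzy_blk⟩

theorem stronglyEtaLike_of_blocks_lt {L : Type*} [LinearOrder L] {I : Set L}
    (hdense : DenseCondOn (Set.univ : Set L)) (hI : I.OrdConnected) {k : ℕ}
    (hblocks : ∀ x ∈ I, ({y ∈ I | Blk x y}).Finite ∧ ({y ∈ I | Blk x y}).ncard < k) :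
    StronglyEtaLike I :=
  ⟨hI, hdense.of_ordConnected_subset (subset_univ I) hI, k, hblocks⟩

/-- If L has dense condensation and no infinite strongly η-like interval, then
every infinite interval contains blocks of arbitrarily large size. -/
theorem arbitrarily_large_blocks {L : Type*} [LinearOrder L]
    (hdense : DenseCondOn (Set.univ : Set L))
    (hno : ¬ ∃ I : Set L, I.Infinite ∧ StronglyEtaLike I) :
    ∀ I : Set L, I.OrdConnected → I.Infinite → ∀ k : ℕ,
      ∃ x ∈ I, k ≤ ({y ∈ I | Blk x y}).ncard ∨ ({y ∈ I | Blk x y}).Infinite := by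
  intro I hconv hinf k
  by_contra! hsmall
  exact hno ⟨I, hinf, stronglyEtaLike_of_blocks_lt hdense hconv fun x hx => (hsmall x hx).symm⟩
end

section
/- If s : ℚ → ℕ is injective with s(q) ≥ 1 for all q, then the lexicographic sum L = Σ_{q∈ℚ} Fin(s(q)) has dense condensation and no infinite strongly η-like interval (since no uniform finite bound on block sizes holds on any infinite interval). -/
open Set

section Aux

variable {s : ℚ → ℕ}

lemma fst_mono_aux {x y : Σₗ q : ℚ, Fin (s q)} (h : x ≤ y) : x.1 ≤ y.1 := by
  rcases Sigma.Lex.le_def.1 h with h | ⟨h, _⟩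
  · exact h.le
  · exact h.le

lemma lt_of_fst_lt_aux {x y : Σₗ q : ℚ, Fin (s q)} (h : x.1 < y.1) : x < y :=
  Sigma.Lex.lt_def.2 (Or.inl h)

/-- The canonical point in block `q`. -/
noncomputable def pt (hs : ∀ q, 1 ≤ s q) (q : ℚ) : Σₗ q : ℚ, Fin (s q) :=
  ⟨q, ⟨0, lt_of_lt_of_le Nat.zero_lt_one (hs q)⟩⟩

lemma pt_inj (hs : ∀ q, 1 ≤ s q) : Function.Injective (pt hs) := by
  intro a b h
  exact congrArg Sigma.fst h

lemma not_blk_of_fst_lt (hs : ∀ q, 1 ≤ s q) {x y : Σₗ q : ℚ, Fin (s q)}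
    (hlt : x.1 < y.1) : ¬ Blk x y := by
  intro hb
  have hxy : x ≤ y := (lt_of_fst_lt_aux hlt).le
  have hIoo : (Set.Ioo x.1 y.1).Infinite := Set.Ioo_infinite hlt
  have himg : (pt hs '' Set.Ioo x.1 y.1).Infinite :=
    hIoo.image ((pt_inj hs).injOn)
  refine himg.mono ?_ hb
  rintro _ ⟨q, hq, rfl⟩
  rw [Set.uIcc_of_le hxy]
  exact ⟨(lt_of_fst_lt_aux (show x.1 < (pt hs q).1 from hq.1)).le,
    (lt_of_fst_lt_aux (show (pt hs q).1 < y.1 from hq.2)).le⟩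

lemma blk_iff_aux (hs : ∀ q, 1 ≤ s q) (x y : Σₗ q : ℚ, Fin (s q)) :
    Blk x y ↔ x.1 = y.1 := by
  constructor
  · intro hb
    by_contra hne
    rcases lt_or_gt_of_ne hne with hlt | hlt
    · exact not_blk_of_fst_lt hs hlt hb
    · exact not_blk_of_fst_lt hs hlt (by simpa only [Blk, Set.uIcc_comm] using hb)
  · intro h
    have hsub : Set.uIcc x y ⊆ Set.range (Sigma.mk x.1) := by
      intro p hp
      have h1 : (x ⊓ y).1 ≤ p.1 := fst_mono_aux hp.1
      have h2 : p.1 ≤ (x ⊔ y).1 := fst_mono_aux hp.2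
      have hinf : (x ⊓ y).1 = x.1 := by
        rcases min_choice x y with hm | hm <;> rw [show x ⊓ y = min x y from rfl, hm]
        exact h.symm
      have hsupp : (x ⊔ y).1 = x.1 := by
        rcases max_choice x y with hm | hm <;> rw [show x ⊔ y = max x y from rfl, hm]
        exact h.symm
      have hpfst : p.1 = x.1 := le_antisymm (hsupp ▸ h2) (hinf ▸ h1)
      obtain ⟨pq, pi⟩ := p
      dsimp at hpfst
      subst hpfst
      exact ⟨pi, rfl⟩
    exact (Set.finite_range _).subset hsub

end Aux

/-- For injective block sizes, the lexicographic sum over ℚ has dense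
condensation and no infinite strongly η-like interval. -/
theorem lex_sum_dense_no_etaLike (s : ℚ → ℕ) (hinj : Function.Injective s)
    (hs : ∀ q, 1 ≤ s q) :
    DenseCondOn (Set.univ : Set (Σₗ q : ℚ, Fin (s q))) ∧
      ¬ ∃ I : Set (Σₗ q : ℚ, Fin (s q)), I.Infinite ∧ StronglyEtaLike I := by
  constructor
  · -- dense condensation on univ
    intro x _ y _ hxy hnb
    have hfst : x.1 < y.1 := by
      rcases lt_or_eq_of_le (fst_mono_aux hxy.le) with h | h
      · exact h
      · exact absurd ((blk_iff_aux hs x y).2 h) hnb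
    obtain ⟨q, hq1, hq2⟩ := exists_between hfst
    refine ⟨pt hs q, trivial, lt_of_fst_lt_aux hq1, lt_of_fst_lt_aux hq2, ?_, ?_⟩
    · rw [blk_iff_aux hs]; exact fun h => absurd (h ▸ hq1) (lt_irrefl _)
    · rw [blk_iff_aux hs]; exact fun h => absurd (h ▸ hq2) (lt_irrefl _)
  · -- no infinite strongly η-like interval
    rintro ⟨I, hI, hconv, _, k, hk⟩
    -- I has two points with distinct first coordinates
    obtain ⟨a, ha, b, hb, hab⟩ : ∃ a ∈ I, ∃ b ∈ I, a.1 < b.1 := by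
      by_contra hcon
      push_neg at hcon
      rcases hI.nonempty with ⟨a, ha⟩
      have : I ⊆ Set.range (Sigma.mk a.1) := by
        intro p hp
        have h1 : p.1 ≤ a.1 := hcon a ha p hp
        have h2 : a.1 ≤ p.1 := hcon p hp a ha
        have : p.1 = a.1 := le_antisymm h1 h2
        obtain ⟨pq, pi⟩ := p
        dsimp at this; subst this
        exact ⟨pi, rfl⟩
      exact hI ((Set.finite_range _).subset this)
    -- find a rational r between with s r ≥ k
    have hIoo : (Set.Ioo a.1 b.1).Infinite := Set.Ioo_infinite hab
    have himg : (s '' Set.Ioo a.1 b.1).Infinite := hIoo.image hinj.injOn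
    obtain ⟨n, ⟨r, hr, rfl⟩, hkn⟩ := himg.exists_gt k
    -- the whole block of r lies in I
    have hrI : ∀ i : Fin (s r), (⟨r, i⟩ : Σₗ q : ℚ, Fin (s q)) ∈ I := by
      intro i
      refine hconv.out ha hb ⟨?_, ?_⟩
      · exact (lt_of_fst_lt_aux (show a.1 < r from hr.1)).le
      · exact (lt_of_fst_lt_aux (show r < b.1 from hr.2)).le
    set f : Fin (s r) → Σₗ q : ℚ, Fin (s q) := fun i => ⟨r, i⟩ with hf
    have hfinj : Function.Injective f := by
      intro i j h
      have h' : (⟨r, i⟩ : Σ q : ℚ, Fin (s q)) = ⟨r, j⟩ := h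
      exact eq_of_heq (Sigma.mk.inj_iff.mp h').2
    have hrange : Set.range f ⊆ {y ∈ I | Blk (pt hs r) y} := by
      rintro _ ⟨i, rfl⟩
      exact ⟨hrI i, (blk_iff_aux hs _ _).2 rfl⟩
    obtain ⟨hfin, hcard⟩ := hk (pt hs r) (hrI _)
    have h1 : (Set.range f).ncard = s r := by
      rw [← Set.image_univ, Set.ncard_image_of_injective _ hfinj, Set.ncard_univ]
      simp
    have h2 : s r ≤ ({y ∈ I | Blk (pt hs r) y}).ncard := by
      rw [← h1]
      exact Set.ncard_le_ncard hrange hfin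
    omega
end
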